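/- arXiv:1002.2633 — 2 statements merged into one kernel-verified Lean document; each statement's English description precedes it below -/
import Mathlib

section
/- Let Z be a metric space and T : Lip_bs(Z) × Lip_loc(Z)^m → ℝ an m-dimensional metric functional (multilinear, continuous under pointwise convergence with locally uniform Lipschitz bounds, and local in the sense that T(f,π)=0 whenever some π_i is constant on a δ-neighborhood of spt f). If some π_i is constant on spt f, then T(f,π_1,…,π_m)=0. -/
open Metric Filter MeasureTheory ENNReal Bornology Topology

variable {Z : Type*} [MetricSpace Z]

/-- Bounded-support Lipschitz real functions. -/
def LipBS {Z : Type*} [MetricSpace Z] (f : Z → ℝ) : Prop :=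
  (∃ K : NNReal, LipschitzWith K f) ∧ IsBounded (tsupport f)

/-- Functions Lipschitz on bounded subsets. -/
def LipLoc {Z : Type*} [MetricSpace Z] (f : Z → ℝ) : Prop :=
  ∀ s : Set Z, IsBounded s → ∃ K : NNReal, LipschitzOnWith K f s

/-- Multilinearity of a functional on `Lip_bs(Z) × Lip_loc(Z)^m`. -/
def IsMultilinearFunctional {Z : Type*} [MetricSpace Z] {m : ℕ}
    (T : (Z → ℝ) → (Fin m → Z → ℝ) → ℝ) : Prop :=
  (∀ f g π, LipBS f → LipBS g → (∀ i, LipLoc (π i)) →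
      T (f + g) π = T f π + T g π) ∧
  (∀ (c : ℝ) f π, LipBS f → (∀ i, LipLoc (π i)) → T (c • f) π = c * T f π) ∧
  (∀ f π (i : Fin m) (g g' : Z → ℝ), LipBS f → (∀ j, LipLoc (π j)) → LipLoc g → LipLoc g' →
      T f (Function.update π i (g + g')) =
        T f (Function.update π i g) + T f (Function.update π i g')) ∧
  (∀ f π (i : Fin m) (c : ℝ) (g : Z → ℝ), LipBS f → (∀ j, LipLoc (π j)) → LipLoc g →
      T f (Function.update π i (c • g)) = c * T f (Function.update π i g))

/-- Metric functional: multilinear, continuous and local (Definition 2.1). -/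
def IsMetricFunctional {Z : Type*} [MetricSpace Z] {m : ℕ}
    (T : (Z → ℝ) → (Fin m → Z → ℝ) → ℝ) : Prop :=
  IsMultilinearFunctional T ∧
  (∀ f (π : Fin m → Z → ℝ) (πj : ℕ → Fin m → Z → ℝ),
      LipBS f → (∀ i, LipLoc (π i)) → (∀ j i, LipLoc (πj j i)) →
      (∀ i z, Tendsto (fun j => πj j i z) atTop (𝓝 (π i z))) →
      (∀ s : Set Z, IsBounded s → ∃ K : NNReal, ∀ i j, LipschitzOnWith K (πj j i) s) →
      Tendsto (fun j => T f (πj j)) atTop (𝓝 (T f π))) ∧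
  (∀ f π, LipBS f → (∀ i, LipLoc (π i)) →
      (∃ i : Fin m, ∃ δ : ℝ, 0 < δ ∧ ∀ z w : Z,
        infDist z (tsupport f) ≤ δ → infDist w (tsupport f) ≤ δ → π i z = π i w) →
      T f π = 0)

/-- The mass of `T` in a set `V`. -/
noncomputable def massIn {Z : Type*} [MetricSpace Z] {m : ℕ}
    (T : (Z → ℝ) → (Fin m → Z → ℝ) → ℝ) (V : Set Z) : ℝ≥0∞ :=
  ⨆ p : {q : (n : ℕ) × (Fin n → (Z → ℝ) × (Fin m → Z → ℝ)) //
      (∀ i, LipBS (q.2 i).1 ∧ tsupport (q.2 i).1 ⊆ V ∧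
        ∀ k, LipschitzWith 1 ((q.2 i).2 k)) ∧
      (∀ z, (∑ i : Fin q.1, |(q.2 i).1 z|) ≤ 1)},
    ENNReal.ofReal (∑ i : Fin p.1.1, T ((p.1.2 i).1) ((p.1.2 i).2))

/-- The outer measure `‖T‖`. -/
noncomputable def normT {Z : Type*} [MetricSpace Z] {m : ℕ}
    (T : (Z → ℝ) → (Fin m → Z → ℝ) → ℝ) (A : Set Z) : ℝ≥0∞ :=
  ⨅ (V : Set Z) (_ : IsOpen V ∧ A ⊆ V), massIn T V

/-- Finite mass on bounded sets, concentrated near compact sets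
(membership condition for `M_{m,loc}(Z)`). -/
def MlocCond {Z : Type*} [MetricSpace Z] {m : ℕ}
    (T : (Z → ℝ) → (Fin m → Z → ℝ) → ℝ) : Prop :=
  ∀ U : Set Z, IsOpen U → IsBounded U → ∀ ε : ℝ, 0 < ε →
    ∃ C : Set Z, IsCompact C ∧ C ⊆ U ∧ massIn T U < ⊤ ∧
      massIn T (U \ C) < ENNReal.ofReal ε

/-! Truncate `π i` to the constant `c = π i z₀` wherever it is `ε`-close to `c`. Since `π i`
is constant on `spt f` and Lipschitz near it, the truncation is constant on a whole neighbourhood of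
`spt f`, so locality kills `T`; as `ε → 0` the truncations converge pointwise to `π i` with the same
Lipschitz bounds, so continuity gives `T (f, π) = 0`. -/

open Function

/-- The point of `[g z - ε, g z + ε]` nearest to `c`. -/
def snapTo {X : Type*} (c ε : ℝ) (g : X → ℝ) (z : X) : ℝ :=
  min (max (g z - ε) c) (g z + ε)

section Snap

variable {X : Type*} {c ε : ℝ} {g : X → ℝ} {z : X}

lemma lipschitzWith_min_max_sub_add (c ε : ℝ) :
    LipschitzWith 1 (fun x : ℝ => min (max (x - ε) c) (x + ε)) := by
  simpa using ((LipschitzWith.id.sub (LipschitzWith.const ε)).max_const c).min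
    (LipschitzWith.id.add (LipschitzWith.const ε))

lemma LipschitzOnWith.snapTo [PseudoEMetricSpace X] {K : NNReal} {s : Set X}
    (hg : LipschitzOnWith K g s) : LipschitzOnWith K (_root_.snapTo c ε g) s := by
  have h := (lipschitzWith_min_max_sub_add c ε).comp_lipschitzOnWith hg
  rwa [one_mul] at h

lemma LipLoc.snapTo [MetricSpace X] (hg : LipLoc g) : LipLoc (_root_.snapTo c ε g) :=
  fun s hs => (hg s hs).imp fun _ h => h.snapTo

lemma abs_snapTo_sub_le (hε : 0 ≤ ε) : |snapTo c ε g z - g z| ≤ ε := by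
  rw [abs_le, snapTo]
  constructor
  · linarith [le_min (le_max_left (g z - ε) c) (by linarith : g z - ε ≤ g z + ε)]
  · linarith [min_le_right (max (g z - ε) c) (g z + ε)]

lemma snapTo_eq_of_abs_sub_le (h : |g z - c| ≤ ε) : snapTo c ε g z = c := by
  rw [abs_le] at h
  rw [snapTo, max_eq_right (by linarith), min_eq_left (by linarith)]

end Snap

section Lipschitz

variable {X : Type*} [MetricSpace X]

lemma abs_sub_le_of_infDist_lt {S : Set X} {g : X → ℝ} {c r : ℝ} {K : NNReal} {z : X}
    (hS : S.Nonempty) (hg : LipschitzOnWith K g (thickening r S)) (hc : ∀ w ∈ S, g w = c)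
    (hz : infDist z S < r) : |g z - c| ≤ K * r := by
  obtain ⟨w, hw, hzw⟩ := (infDist_lt_iff hS).1 hz
  have hw' : w ∈ thickening r S := self_subset_thickening (hz.trans_le' infDist_nonneg) S hw
  rw [← hc w hw, ← Real.dist_eq]
  exact (hg.dist_le_mul z ((mem_thickening_iff_infDist_lt hS).2 hz) w hw').trans
    (by gcongr)

lemma LipLoc.exists_pos_snapTo_eq_of_infDist_le {S : Set X} {g : X → ℝ} {c ε : ℝ}
    (hg : LipLoc g) (hS : IsBounded S) (hSne : S.Nonempty) (hc : ∀ w ∈ S, g w = c)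
    (hε : 0 < ε) : ∃ δ > 0, ∀ z, infDist z S ≤ δ → _root_.snapTo c ε g z = c := by
  obtain ⟨K, hK⟩ := hg _ (hS.thickening (δ := 1))
  set r := min 1 (ε / (K + 1))
  have hr : 0 < r := lt_min one_pos (by positivity)
  have hKr : K * r ≤ ε := calc
    (K : ℝ) * r ≤ (K + 1) * (ε / (K + 1)) :=
      mul_le_mul (by linarith) (min_le_right _ _) hr.le (by positivity)
    _ = ε := by field_simp
  refine ⟨r / 2, half_pos hr, fun z hz => snapTo_eq_of_abs_sub_le ?_⟩
  exact (abs_sub_le_of_infDist_lt hSne (hK.mono (thickening_mono (min_le_left _ _) S)) hc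
    (by linarith)).trans hKr

lemma exists_lipschitzOnWith_of_lipLoc {ι : Type*} [Fintype ι] {π : ι → X → ℝ}
    (hπ : ∀ k, LipLoc (π k)) {s : Set X} (hs : IsBounded s) :
    ∃ K, ∀ k, LipschitzOnWith K (π k) s := by
  choose K hK using fun k => hπ k s hs
  exact ⟨Finset.univ.sup K, fun k => (hK k).weaken (Finset.le_sup (Finset.mem_univ k))⟩

end Lipschitz

section Approximation

variable {X ι : Type*} [DecidableEq ι] (π : ι → X → ℝ) (i : ι) (c : ℝ)

lemma exists_lipschitzOnWith_update_snapTo [MetricSpace X] [Fintype ι] (hπ : ∀ k, LipLoc (π k))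
    {s : Set X} (hs : IsBounded s) :
    ∃ K, ∀ k (ε : ℝ), LipschitzOnWith K (update π i (snapTo c ε (π i)) k) s := by
  obtain ⟨K, hK⟩ := exists_lipschitzOnWith_of_lipLoc hπ hs
  refine ⟨K, fun k ε => ?_⟩
  rcases eq_or_ne k i with rfl | hki
  · simpa using (hK k).snapTo
  · simp [update_of_ne hki, hK k]

lemma tendsto_update_snapTo {ε : ℕ → ℝ} (hε : Tendsto ε atTop (𝓝 0)) (hε₀ : ∀ j, 0 ≤ ε j)
    (k : ι) (z : X) :
    Tendsto (fun j => update π i (snapTo c (ε j) (π i)) k z) atTop (𝓝 (π k z)) := by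
  rcases eq_or_ne k i with rfl | hki
  · simp only [update_self]
    exact tendsto_iff_dist_tendsto_zero.2 <|
      squeeze_zero (fun _ => dist_nonneg) (fun j => abs_snapTo_sub_le (hε₀ j)) hε
  · simp [update_of_ne hki]

end Approximation

lemma IsMultilinearFunctional.map_zero_left {X : Type*} [MetricSpace X] {m : ℕ}
    {T : (X → ℝ) → (Fin m → X → ℝ) → ℝ} (hT : IsMultilinearFunctional T)
    {π : Fin m → X → ℝ} (hπ : ∀ i, LipLoc (π i)) : T 0 π = 0 := by
  have h0 : LipBS (0 : X → ℝ) := ⟨⟨0, LipschitzWith.const 0⟩, by simp⟩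
  simpa using hT.2.1 0 0 π h0 hπ

/-- strict locality of metric functionals (Lemma 2.2):
if some `π i` is constant on `spt f`, then `T (f, π) = 0`. -/
theorem strict_locality {Z : Type*} [MetricSpace Z] {m : ℕ}
    (T : (Z → ℝ) → (Fin m → Z → ℝ) → ℝ) (hT : IsMetricFunctional T)
    (f : Z → ℝ) (π : Fin m → Z → ℝ)
    (hf : LipBS f) (hπ : ∀ i, LipLoc (π i))
    (i : Fin m) (hconst : ∀ z ∈ tsupport f, ∀ w ∈ tsupport f, π i z = π i w) :
    T f π = 0 := by
  obtain ⟨hlin, hcont, hloc⟩ := hT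
  rcases (tsupport f).eq_empty_or_nonempty with hS | ⟨z₀, hz₀⟩
  · rw [tsupport_eq_empty_iff.1 hS]
    exact hlin.map_zero_left hπ
  set ε : ℕ → ℝ := fun j => 1 / (j + 1)
  have hε : ∀ j, 0 < ε j := fun j => by positivity
  set πj : ℕ → Fin m → Z → ℝ := fun j => update π i (snapTo (π i z₀) (ε j) (π i))
  have hπj : ∀ j k, LipLoc (πj j k) := fun j =>
    (forall_update_iff π fun _ g => LipLoc g).2 ⟨(hπ i).snapTo, fun k _ => hπ k⟩
  have hzero : ∀ j, T f (πj j) = 0 := by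
    intro j
    obtain ⟨δ, hδ, hsnap⟩ := (hπ i).exists_pos_snapTo_eq_of_infDist_le hf.2 ⟨z₀, hz₀⟩
      (fun w hw => hconst w hw z₀ hz₀) (hε j)
    refine hloc f _ hf (hπj j) ⟨i, δ, hδ, fun z w hz hw => ?_⟩
    simp only [πj, update_self, hsnap z hz, hsnap w hw]
  have hlim : Tendsto (fun j => T f (πj j)) atTop (𝓝 (T f π)) :=
    hcont f π πj hf hπ hπj
      (tendsto_update_snapTo π i _ tendsto_one_div_add_atTop_nhds_zero_nat fun j => (hε j).le)
      fun s hs => (exists_lipschitzOnWith_update_snapTo π i _ hπ hs).imp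
        fun _ hK k j => hK k (ε j)
  exact tendsto_nhds_unique hlim (by simp [hzero])
end

section
/- Let T ∈ M_{m,loc}(Z) be a metric current with locally finite mass. Then for all (f, π_1, …, π_m) ∈ Lip_bs(Z) × Lip_loc(Z)^m, |T(f,π_1,…,π_m)| ≤ (∏_{i=1}^m Lip(π_i|_{spt f})) · ∫_Z |f| d‖T‖. -/
open Metric Filter MeasureTheory ENNReal Bornology Topology

variable {Z : Type*} [MetricSpace Z]

/-!
Locality and continuity show that `T(f, π)` only sees `π` on `spt f`: clamping `π` to within
`L · cutoff` of a McShane extension `σ` of `π|spt f` gives tuples that agree with `π` near `spt f`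
and converge to `σ` with locally uniform Lipschitz constants. Multilinearity then rescales `σ` to
`1`-Lipschitz maps. For these, cut `f⁺` and `f⁻` into slabs of height `δ`; by the definition of
mass, a slab contributes at most `δ ‖T‖` of an open superlevel set of `f`, and these sum to
`∫ |f| d‖T‖` up to `O(δ ‖T‖(U))` for a bounded neighbourhood `U` of `spt f`, which has finite mass.
-/

namespace LipBS

variable {f g : Z → ℝ}

lemma zero : LipBS (0 : Z → ℝ) :=
  ⟨⟨0, LipschitzWith.const' 0⟩, by simp⟩

lemma continuous (hf : LipBS f) : Continuous f :=
  hf.1.choose_spec.continuous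

lemma add (hf : LipBS f) (hg : LipBS g) : LipBS (f + g) := by
  obtain ⟨⟨Kf, hKf⟩, hbf⟩ := hf
  obtain ⟨⟨Kg, hKg⟩, hbg⟩ := hg
  exact ⟨⟨Kf + Kg, hKf.add hKg⟩, (hbf.union hbg).subset (tsupport_add f g)⟩

lemma smul (c : ℝ) (hf : LipBS f) : LipBS (c • f) := by
  obtain ⟨⟨Kf, hKf⟩, hbf⟩ := hf
  exact ⟨⟨_, (lipschitzWith_smul c).comp hKf⟩,
    hbf.subset (tsupport_smul_subset_right (fun _ => c) f)⟩

lemma neg (hf : LipBS f) : LipBS (-f) := by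
  simpa using hf.smul (-1)

lemma sum {ι : Type*} {g : ι → Z → ℝ} (s : Finset ι) (hg : ∀ j ∈ s, LipBS (g j)) :
    LipBS (∑ j ∈ s, g j) := by
  classical
  induction s using Finset.induction_on with
  | empty => simpa using LipBS.zero
  | insert a s ha ih =>
    rw [Finset.sum_insert ha]
    exact (hg a (s.mem_insert_self a)).add (ih fun j hj => hg j (Finset.mem_insert_of_mem hj))

lemma comp {φ : ℝ → ℝ} {K : NNReal} (hφ : LipschitzWith K φ) (hφ0 : φ 0 = 0) (hf : LipBS f) :
    LipBS (φ ∘ f) := by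
  obtain ⟨⟨Kf, hKf⟩, hbf⟩ := hf
  exact ⟨⟨_, hφ.comp hKf⟩, hbf.subset (tsupport_comp_subset hφ0 f)⟩

lemma exists_abs_le (hf : LipBS f) : ∃ F : ℝ, ∀ z, |f z| ≤ F := by
  obtain ⟨⟨Kf, hKf⟩, hbf⟩ := hf
  obtain ⟨F, hF⟩ := (hKf.isBounded_image hbf).exists_norm_le
  refine ⟨max F 0, fun z => ?_⟩
  by_cases hz : z ∈ tsupport f
  · exact (hF _ (Set.mem_image_of_mem f hz)).trans (le_max_left _ _)
  · simp [image_eq_zero_of_notMem_tsupport hz]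

end LipBS

lemma LipschitzWith.lipLoc {K : NNReal} {f : Z → ℝ} (hf : LipschitzWith K f) : LipLoc f :=
  fun _ _ => ⟨K, hf.lipschitzOnWith⟩

namespace LipLoc

variable {f g : Z → ℝ}

lemma sub (hf : LipLoc f) (hg : LipLoc g) : LipLoc (f - g) := fun s hs => by
  obtain ⟨Kf, hKf⟩ := hf s hs
  obtain ⟨Kg, hKg⟩ := hg s hs
  exact ⟨Kf + Kg, hKf.sub hKg⟩

lemma smul (c : ℝ) (hf : LipLoc f) : LipLoc (c • f) := fun s hs => by
  obtain ⟨Kf, hKf⟩ := hf s hs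
  exact ⟨_, (lipschitzWith_smul c).comp_lipschitzOnWith hKf⟩

end LipLoc

namespace IsMultilinearFunctional

variable {m : ℕ} {T : (Z → ℝ) → (Fin m → Z → ℝ) → ℝ} (hT : IsMultilinearFunctional T)
  {f : Z → ℝ} {π : Fin m → Z → ℝ}
include hT

lemma map_add {g : Z → ℝ} (hf : LipBS f) (hg : LipBS g) (hπ : ∀ i, LipLoc (π i)) :
    T (f + g) π = T f π + T g π :=
  hT.1 f g π hf hg hπ

lemma map_smul (c : ℝ) (hf : LipBS f) (hπ : ∀ i, LipLoc (π i)) : T (c • f) π = c * T f π :=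
  hT.2.1 c f π hf hπ

lemma map_sub {g : Z → ℝ} (hf : LipBS f) (hg : LipBS g) (hπ : ∀ i, LipLoc (π i)) :
    T (f - g) π = T f π - T g π := by
  rw [sub_eq_add_neg, ← neg_one_smul ℝ g, hT.map_add hf (hg.smul (-1)) hπ, hT.map_smul _ hg hπ]
  ring

lemma map_zero (hπ : ∀ i, LipLoc (π i)) : T 0 π = 0 := by
  simpa using hT.map_smul 0 LipBS.zero hπ

lemma map_sum {ι : Type*} {g : ι → Z → ℝ} (s : Finset ι) (hg : ∀ j ∈ s, LipBS (g j))
    (hπ : ∀ i, LipLoc (π i)) : T (∑ j ∈ s, g j) π = ∑ j ∈ s, T (g j) π := by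
  classical
  induction s using Finset.induction_on with
  | empty => simpa using hT.map_zero hπ
  | insert a s ha ih =>
    have hs : ∀ j ∈ s, LipBS (g j) := fun j hj => hg j (Finset.mem_insert_of_mem hj)
    rw [Finset.sum_insert ha, Finset.sum_insert ha,
      hT.map_add (hg a (s.mem_insert_self a)) (LipBS.sum s hs) hπ, ih hs]

lemma map_update_add (hf : LipBS f) (hπ : ∀ i, LipLoc (π i)) (i : Fin m) {g g' : Z → ℝ}
    (hg : LipLoc g) (hg' : LipLoc g') :
    T f (Function.update π i (g + g')) =
      T f (Function.update π i g) + T f (Function.update π i g') :=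
  hT.2.2.1 f π i g g' hf hπ hg hg'

lemma map_update_smul (hf : LipBS f) (hπ : ∀ i, LipLoc (π i)) (i : Fin m) (c : ℝ) {g : Z → ℝ}
    (hg : LipLoc g) :
    T f (Function.update π i (c • g)) = c * T f (Function.update π i g) :=
  hT.2.2.2 f π i c g hf hπ hg

lemma map_piecewise_smul (hf : LipBS f) (hπ : ∀ i, LipLoc (π i))
    (c : Fin m → ℝ) (s : Finset (Fin m)) :
    T f (s.piecewise (fun i => c i • π i) π) = (∏ i ∈ s, c i) * T f π := by
  induction s using Finset.induction_on with
  | empty => simp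
  | insert a s ha ih =>
    set P := s.piecewise (fun i => c i • π i) π
    have hP : ∀ i, LipLoc (P i) := fun i =>
      s.piecewise_cases _ π LipLoc ((hπ i).smul (c i)) (hπ i)
    have hrestore : Function.update P a (π a) = P := by
      rw [← Finset.piecewise_eq_of_notMem s (fun i => c i • π i) π ha, Function.update_eq_self]
    rw [Finset.piecewise_insert, hT.map_update_smul hf hP a (c a) (hπ a), hrestore, ih,
      Finset.prod_insert ha, mul_assoc]

lemma map_smul_right (hf : LipBS f) (hπ : ∀ i, LipLoc (π i)) (c : Fin m → ℝ) :
    T f (fun i => c i • π i) = (∏ i, c i) * T f π := by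
  simpa using hT.map_piecewise_smul hf hπ c Finset.univ

end IsMultilinearFunctional

def clampAbs (b a : ℝ) : ℝ := max (-b) (min a b)

lemma clampAbs_of_abs_le {a b : ℝ} (h : |a| ≤ b) : clampAbs b a = a := by
  obtain ⟨h₁, h₂⟩ := abs_le.mp h
  rw [clampAbs, min_eq_left h₂, max_eq_right h₁]

lemma abs_clampAbs_le {a b : ℝ} (hb : 0 ≤ b) : |clampAbs b a| ≤ b :=
  abs_le.mpr ⟨le_max_left _ _, max_le (by linarith) (min_le_right _ _)⟩

lemma LipschitzOnWith.clampAbs {Kb Ka : NNReal} {b a : Z → ℝ} {s : Set Z}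
    (hb : LipschitzOnWith Kb b s) (ha : LipschitzOnWith Ka a s) :
    LipschitzOnWith (max Kb (max Ka Kb)) (fun z => _root_.clampAbs (b z) (a z)) s := by
  rw [lipschitzOnWith_iff_restrict] at *
  exact hb.neg.max (ha.min hb)

noncomputable def cutoff (S : Set Z) (r : ℝ) (z : Z) : ℝ := max 0 (2 * r - infDist z S)

lemma cutoff_nonneg (S : Set Z) (r : ℝ) (z : Z) : 0 ≤ cutoff S r z :=
  le_max_left _ _

lemma lipschitzWith_cutoff (S : Set Z) (r : ℝ) : LipschitzWith 1 (cutoff S r) := by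
  have h := ((LipschitzWith.const (2 * r)).sub (lipschitz_infDist_pt S)).const_max 0
  rwa [zero_add] at h

lemma infDist_le_cutoff {S : Set Z} {r : ℝ} {z : Z} (hz : infDist z S ≤ r) :
    infDist z S ≤ cutoff S r z :=
  le_max_of_le_right (by linarith)

lemma tendsto_cutoff (S : Set Z) (z : Z) :
    Tendsto (fun j : ℕ => cutoff S (1 / (j + 1)) z) atTop (𝓝 0) := by
  have hcont : Continuous fun r : ℝ => max 0 (2 * r - infDist z S) := by fun_prop
  simpa [cutoff, Function.comp_def, infDist_nonneg] using
    (hcont.tendsto 0).comp (tendsto_one_div_add_atTop_nhds_zero_nat (𝕜 := ℝ))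

lemma abs_le_mul_infDist_of_eqOn_zero {h : Z → ℝ} {S B : Set Z} {L : NNReal}
    (hh : LipschitzOnWith L h B) (hSB : S ⊆ B) (hS : Set.EqOn h 0 S) (hne : S.Nonempty)
    {z : Z} (hz : z ∈ B) : |h z| ≤ L * infDist z S := by
  have hdist : ∀ y ∈ S, |h z| ≤ L * dist z y := fun y hy => by
    simpa [hS hy, Real.dist_eq] using hh.dist_le_mul z hz y (hSB hy)
  rcases eq_or_ne L 0 with rfl | hL
  · obtain ⟨y, hy⟩ := hne
    simpa using hdist y hy
  · have hL' : (0 : ℝ) < L := NNReal.coe_pos.mpr (pos_iff_ne_zero.mpr hL)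
    rw [← div_le_iff₀' hL', le_infDist hne]
    exact fun y hy => (div_le_iff₀' hL').mpr (hdist y hy)

/-- Equals `π` within `r` of `S` as soon as `|π - σ| ≤ L · dist(·, S)` there, and `σ` beyond
`2r`. -/
noncomputable def cutoffBlend (S : Set Z) (L : NNReal) (r : ℝ) (σ π : Z → ℝ) (z : Z) : ℝ :=
  σ z + clampAbs (L * cutoff S r z) (π z - σ z)

lemma cutoffBlend_eq_right {S B : Set Z} {L : NNReal} {r : ℝ} {σ π : Z → ℝ}
    (hL : LipschitzOnWith L (π - σ) B) (hSB : S ⊆ B) (heq : Set.EqOn π σ S) (hne : S.Nonempty)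
    {z : Z} (hzB : z ∈ B) (hz : infDist z S ≤ r) : cutoffBlend S L r σ π z = π z := by
  have hdiff : |π z - σ z| ≤ L * infDist z S :=
    abs_le_mul_infDist_of_eqOn_zero hL hSB (fun y hy => sub_eq_zero.mpr (heq hy)) hne hzB
  have hclamp : |π z - σ z| ≤ L * cutoff S r z :=
    hdiff.trans (mul_le_mul_of_nonneg_left (infDist_le_cutoff hz) L.2)
  rw [cutoffBlend, clampAbs_of_abs_le hclamp]
  ring

lemma LipschitzOnWith.cutoffBlend {s : Set Z} {Kσ Kd : NNReal} {σ π : Z → ℝ}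
    (hσ : LipschitzOnWith Kσ σ s) (hd : LipschitzOnWith Kd (π - σ) s) (S : Set Z) (L : NNReal)
    (r : ℝ) : LipschitzOnWith (Kσ + max L (max Kd L)) (_root_.cutoffBlend S L r σ π) s := by
  have hcut : LipschitzOnWith L (fun z => L * cutoff S r z) s := by
    have h := ((lipschitzWith_smul (L : ℝ)).comp (lipschitzWith_cutoff S r)).lipschitzOnWith
      (s := s)
    rwa [NNReal.nnnorm_eq, mul_one] at h
  exact hσ.add (hcut.clampAbs hd)

lemma tendsto_cutoffBlend (S : Set Z) (L : NNReal) (σ π : Z → ℝ) (z : Z) :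
    Tendsto (fun j : ℕ => cutoffBlend S L (1 / (j + 1)) σ π z) atTop (𝓝 (σ z)) := by
  have hclamp : Tendsto
      (fun j : ℕ => clampAbs (L * cutoff S (1 / (j + 1)) z) (π z - σ z)) atTop (𝓝 0) :=
    squeeze_zero_norm (fun j => abs_clampAbs_le (mul_nonneg L.2 (cutoff_nonneg S _ z)))
      (by simpa using (tendsto_cutoff S z).const_mul (L : ℝ))
  simpa [cutoffBlend] using tendsto_const_nhds.add hclamp

namespace IsMetricFunctional

variable {m : ℕ} {T : (Z → ℝ) → (Fin m → Z → ℝ) → ℝ} (hT : IsMetricFunctional T)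
  {f : Z → ℝ} {π σ : Fin m → Z → ℝ}
include hT

lemma map_eq_zero_of_const_near (hf : LipBS f) (hπ : ∀ i, LipLoc (π i)) (i : Fin m) {δ : ℝ}
    (hδ : 0 < δ)
    (hc : ∀ z w, infDist z (tsupport f) ≤ δ → infDist w (tsupport f) ≤ δ → π i z = π i w) :
    T f π = 0 :=
  hT.2.2 f π hf hπ ⟨i, δ, hδ, hc⟩

lemma map_piecewise_of_eqOn_near (hf : LipBS f) (hπ : ∀ i, LipLoc (π i))
    (hσ : ∀ i, LipLoc (σ i)) {δ : ℝ} (hδ : 0 < δ)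
    (hag : ∀ i z, infDist z (tsupport f) ≤ δ → π i z = σ i z) (s : Finset (Fin m)) :
    T f (s.piecewise σ π) = T f π := by
  induction s using Finset.induction_on with
  | empty => simp
  | insert a s ha ih =>
    set P := s.piecewise σ π
    have hP : ∀ i, LipLoc (P i) := fun i => s.piecewise_cases σ π LipLoc (hσ i) (hπ i)
    have hrestore : Function.update P a (π a) = P := by
      rw [← Finset.piecewise_eq_of_notMem s σ π ha, Function.update_eq_self]
    have hdiff : T f (Function.update P a (σ a - π a)) = 0 := by
      refine hT.map_eq_zero_of_const_near hf ?_ a hδ fun z w hz hw => ?_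
      · exact (Function.forall_update_iff P fun _ g => LipLoc g).mpr
          ⟨(hσ a).sub (hπ a), fun i _ => hP i⟩
      · simp [hag a z hz, hag a w hw]
    rw [Finset.piecewise_insert, ← add_sub_cancel (π a) (σ a),
      hT.1.map_update_add hf hP a (hπ a) ((hσ a).sub (hπ a)), hrestore, hdiff, add_zero, ih]

lemma map_eq_of_eqOn_near (hf : LipBS f) (hπ : ∀ i, LipLoc (π i)) (hσ : ∀ i, LipLoc (σ i))
    {δ : ℝ} (hδ : 0 < δ) (hag : ∀ i z, infDist z (tsupport f) ≤ δ → π i z = σ i z) :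
    T f π = T f σ := by
  simpa using (hT.map_piecewise_of_eqOn_near hf hπ hσ hδ hag Finset.univ).symm

lemma map_eq_of_eqOn_tsupport (hf : LipBS f) (hπ : ∀ i, LipLoc (π i))
    (hσ : ∀ i, LipLoc (σ i)) (heq : ∀ i, Set.EqOn (π i) (σ i) (tsupport f)) :
    T f π = T f σ := by
  set S := tsupport f
  rcases S.eq_empty_or_nonempty with hS | hne
  · obtain rfl : f = 0 := tsupport_eq_empty_iff.mp hS
    rw [hT.1.map_zero hπ, hT.1.map_zero hσ]
  choose L hL using fun i => ((hπ i).sub (hσ i)) _ (hf.2.thickening (δ := 2))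
  -- `ρ j` agrees with `π` near `S` and tends to `σ`, with Lipschitz constants uniform in `j`,
  -- so locality and continuity give `T f π = T f (ρ j) → T f σ`.
  set ρ : ℕ → Fin m → Z → ℝ := fun j i => cutoffBlend S (L i) (1 / (j + 1)) (σ i) (π i)
  have hρ_lip : ∀ s, IsBounded s → ∃ K, ∀ i j, LipschitzOnWith K (ρ j i) s := by
    intro s hs
    choose Kσ hKσ using fun i => hσ i s hs
    choose Kd hKd using fun i => ((hπ i).sub (hσ i)) s hs
    set K : Fin m → NNReal := fun i => Kσ i + max (L i) (max (Kd i) (L i))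
    exact ⟨Finset.univ.sup K, fun i j => ((hKσ i).cutoffBlend (hKd i) S (L i) _).weaken
      (Finset.le_sup (f := K) (Finset.mem_univ i))⟩
  have hρ : ∀ j i, LipLoc (ρ j i) := fun j i s hs => (hρ_lip s hs).imp fun K hK => hK i j
  have hρπ : ∀ j : ℕ, T f π = T f (ρ j) := fun j => by
    have hr : 1 / ((j : ℝ) + 1) < 2 :=
      (div_le_one (by positivity)).mpr (by linarith [j.cast_nonneg (α := ℝ)]) |>.trans_lt
        one_lt_two
    refine hT.map_eq_of_eqOn_near hf hπ (hρ j) (δ := 1 / (j + 1)) (by positivity) fun i z hz => ?_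
    exact (cutoffBlend_eq_right (hL i) (self_subset_thickening two_pos S) (heq i) hne
      ((mem_thickening_iff_infDist_lt hne).mpr (hz.trans_lt hr)) hz).symm
  exact tendsto_nhds_unique tendsto_const_nhds ((hT.2.1 f σ ρ hf hσ hρ
    (fun i z => tendsto_cutoffBlend S (L i) (σ i) (π i) z) hρ_lip).congr fun j => (hρπ j).symm)

end IsMetricFunctional

section Mass

variable {m : ℕ} (T : (Z → ℝ) → (Fin m → Z → ℝ) → ℝ)

lemma massIn_mono {V V' : Set Z} (h : V ⊆ V') : massIn T V ≤ massIn T V' :=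
  iSup_le fun ⟨q, hq, hsum⟩ =>
    le_iSup_of_le ⟨q, fun i => ⟨(hq i).1, (hq i).2.1.trans h, (hq i).2.2⟩, hsum⟩ le_rfl

lemma normT_eq_massIn {V : Set Z} (hV : IsOpen V) : normT T V = massIn T V :=
  le_antisymm (iInf₂_le V ⟨hV, subset_rfl⟩) (le_iInf₂ fun _ hV' => massIn_mono T hV'.2)

variable {T}

lemma ofReal_le_massIn {V : Set Z} {g : Z → ℝ} {τ : Fin m → Z → ℝ} (hg : LipBS g)
    (hgV : tsupport g ⊆ V) (hg1 : ∀ z, |g z| ≤ 1) (hτ : ∀ k, LipschitzWith 1 (τ k)) :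
    ENNReal.ofReal (T g τ) ≤ massIn T V :=
  le_iSup_of_le (ι := {q : (n : ℕ) × (Fin n → (Z → ℝ) × (Fin m → Z → ℝ)) // _})
    ⟨⟨1, fun _ => (g, τ)⟩, fun _ => ⟨hg, hgV, hτ⟩, by simpa using hg1⟩ (by simp)

lemma IsMultilinearFunctional.abs_le_mul_massIn (hT : IsMultilinearFunctional T) {V : Set Z}
    {g : Z → ℝ} {τ : Fin m → Z → ℝ} {δ : ℝ} (hδ : 0 < δ) (hg : LipBS g) (hgV : tsupport g ⊆ V)
    (hgδ : ∀ z, |g z| ≤ δ) (hτ : ∀ k, LipschitzWith 1 (τ k)) :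
    ENNReal.ofReal |T g τ| ≤ ENNReal.ofReal δ * massIn T V := by
  obtain ⟨c, hc, hcT⟩ : ∃ c : ℝ, |c| = 1 ∧ c * T g τ = |T g τ| := by
    rcases abs_cases (T g τ) with ⟨h, -⟩ | ⟨h, -⟩
    exacts [⟨1, by simp, by simp [h]⟩, ⟨-1, by simp, by simp [h]⟩]
  have hmass := ofReal_le_massIn (T := T) (hg.smul (c / δ))
    ((tsupport_smul_subset_right (fun _ => c / δ) g).trans hgV)
    (fun z => by
      rw [Pi.smul_apply, smul_eq_mul, abs_mul, abs_div, hc, abs_of_pos hδ, div_mul_eq_mul_div,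
        one_mul, div_le_one hδ]
      exact hgδ z) hτ
  rw [hT.map_smul _ hg fun k => (hτ k).lipLoc, div_mul_eq_mul_div, hcT] at hmass
  calc ENNReal.ofReal |T g τ| = ENNReal.ofReal δ * ENNReal.ofReal (|T g τ| / δ) := by
        rw [← ENNReal.ofReal_mul hδ.le, mul_div_cancel₀ _ hδ.ne']
    _ ≤ ENNReal.ofReal δ * massIn T V := by gcongr

end Mass

def layer (δ : ℝ) (j : ℕ) (t : ℝ) : ℝ := min (max (t - j * δ) 0) δ

section Layer

variable {δ : ℝ}

lemma layer_nonneg (hδ : 0 ≤ δ) (j : ℕ) (t : ℝ) : 0 ≤ layer δ j t :=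
  le_min (le_max_right _ _) hδ

lemma abs_layer_le (hδ : 0 ≤ δ) (j : ℕ) (t : ℝ) : |layer δ j t| ≤ δ := by
  rw [abs_of_nonneg (layer_nonneg hδ j t)]
  exact min_le_right _ _

lemma layer_eq_zero_of_le (hδ : 0 ≤ δ) {j : ℕ} {t : ℝ} (h : t ≤ j * δ) : layer δ j t = 0 := by
  simp [layer, max_eq_right (sub_nonpos.mpr h), hδ]

lemma layer_zero (hδ : 0 ≤ δ) (j : ℕ) : layer δ j 0 = 0 :=
  layer_eq_zero_of_le hδ (by positivity)

lemma layer_eq_of_add_one_mul_le {j : ℕ} {t : ℝ} (h : (j + 1) * δ ≤ t) : layer δ j t = δ :=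
  min_eq_right (le_max_of_le_left (by linarith))

lemma lipschitzWith_layer (δ : ℝ) (j : ℕ) : LipschitzWith 1 (layer δ j) := by
  have h := ((LipschitzWith.id.sub (LipschitzWith.const (j * δ))).max_const 0).min_const δ
  rwa [add_zero] at h

lemma layer_eq_sub (hδ : 0 ≤ δ) (j : ℕ) (t : ℝ) :
    layer δ j t = min (max t 0) ((j + 1 : ℕ) * δ) - min (max t 0) (j * δ) := by
  push_cast
  have : (0 : ℝ) ≤ j * δ := by positivity
  simp only [layer, min_def, max_def]
  split_ifs <;> linarith

lemma sum_layer (hδ : 0 ≤ δ) (t : ℝ) (N : ℕ) :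
    ∑ j ∈ Finset.range N, layer δ j t = min (max t 0) (N * δ) := by
  simp_rw [layer_eq_sub hδ]
  rw [Finset.sum_range_sub (fun j : ℕ => min (max t 0) (j * δ))]
  simp

lemma sum_layer_sub_sum_layer_neg (hδ : 0 ≤ δ) {t : ℝ} {N : ℕ} (ht : |t| ≤ N * δ) :
    ∑ j ∈ Finset.range N, layer δ j t - ∑ j ∈ Finset.range N, layer δ j (-t) = t := by
  rw [sum_layer hδ, sum_layer hδ]
  obtain ⟨h₁, h₂⟩ := abs_le.mp ht
  simp only [min_def, max_def]
  split_ifs <;> linarith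

lemma tsupport_layer_comp_subset {f : Z → ℝ} (hf : Continuous f) (hδ : 0 ≤ δ) (j : ℕ) :
    tsupport (layer δ j ∘ f) ⊆ {z | j * δ ≤ f z} ∩ tsupport f := by
  refine Set.subset_inter (closure_minimal (fun z hz => ?_) (isClosed_le continuous_const hf))
    (tsupport_comp_subset (layer_zero hδ j) f)
  by_contra hlt
  exact hz (layer_eq_zero_of_le hδ (not_le.mp hlt).le)

end Layer

lemma IsMultilinearFunctional.abs_map_layer_comp_le [MeasurableSpace Z] {μ : Measure Z} {m : ℕ}
    {T : (Z → ℝ) → (Fin m → Z → ℝ) → ℝ} (hT : IsMultilinearFunctional T)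
    (hmass : ∀ V, IsOpen V → massIn T V ≤ μ V) {τ : Fin m → Z → ℝ} {U : Set Z} {f : Z → ℝ}
    (hU : IsOpen U) (hf : LipBS f) (hfU : tsupport f ⊆ U) (hτ : ∀ k, LipschitzWith 1 (τ k))
    {δ : ℝ} (hδ : 0 < δ) (j : ℕ) :
    ENNReal.ofReal |T (layer δ j ∘ f) τ| ≤
      ENNReal.ofReal δ * μ ({z | (j - 1) * δ < f z} ∩ U) := by
  have hV : tsupport (layer δ j ∘ f) ⊆ {z | (j - 1) * δ < f z} ∩ U := fun z hz => by
    obtain ⟨hz₁, hz₂⟩ := tsupport_layer_comp_subset hf.continuous hδ.le j hz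
    have hjz : (j : ℝ) * δ ≤ f z := hz₁
    exact ⟨show ((j : ℝ) - 1) * δ < f z by linarith, hfU hz₂⟩
  refine (hT.abs_le_mul_massIn hδ (hf.comp (lipschitzWith_layer δ j) (layer_zero hδ.le j)) hV
    (fun z => abs_layer_le hδ.le j (f z)) hτ).trans ?_
  gcongr
  exact hmass _ ((isOpen_lt continuous_const hf.continuous).inter hU)

lemma measure_mul_le_lintegral_layer [MeasurableSpace Z] [OpensMeasurableSpace Z] {μ : Measure Z}
    {f : Z → ℝ} (hf : Continuous f) (δ : ℝ) (j : ℕ) :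
    ENNReal.ofReal δ * μ {z | (j + 1) * δ < f z} ≤
      ∫⁻ z, ENNReal.ofReal (layer δ j (f z)) ∂μ := by
  rw [← lintegral_indicator_const (isOpen_lt continuous_const hf).measurableSet]
  refine lintegral_mono (Set.indicator_le fun z hz => ?_)
  rw [layer_eq_of_add_one_mul_le hz.le]

lemma sum_mul_measure_lt_le_lintegral [MeasurableSpace Z] [OpensMeasurableSpace Z]
    {μ : Measure Z} {f : Z → ℝ} (hf : Continuous f) {δ : ℝ} (hδ : 0 ≤ δ) (N : ℕ) :
    ∑ j ∈ Finset.range N, ENNReal.ofReal δ * μ {z | (j + 1) * δ < f z} ≤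
      ∫⁻ z, ENNReal.ofReal (max (f z) 0) ∂μ :=
  calc ∑ j ∈ Finset.range N, ENNReal.ofReal δ * μ {z | (j + 1) * δ < f z}
      ≤ ∑ j ∈ Finset.range N, ∫⁻ z, ENNReal.ofReal (layer δ j (f z)) ∂μ :=
        Finset.sum_le_sum fun j _ => measure_mul_le_lintegral_layer hf δ j
    _ = ∫⁻ z, ENNReal.ofReal (min (max (f z) 0) (N * δ)) ∂μ := by
        rw [← lintegral_finsetSum]
        · simp_rw [← ENNReal.ofReal_sum_of_nonneg fun j _ => layer_nonneg hδ j _, sum_layer hδ]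
        · exact fun j _ =>
            ((lipschitzWith_layer δ j).continuous.comp hf).measurable.ennreal_ofReal
    _ ≤ ∫⁻ z, ENNReal.ofReal (max (f z) 0) ∂μ := by gcongr; exact min_le_left _ _

namespace IsMultilinearFunctional

variable [MeasurableSpace Z] [OpensMeasurableSpace Z] {μ : Measure Z} {m : ℕ}
  {T : (Z → ℝ) → (Fin m → Z → ℝ) → ℝ} (hT : IsMultilinearFunctional T)
  (hmass : ∀ V, IsOpen V → massIn T V ≤ μ V) {τ : Fin m → Z → ℝ} {U : Set Z} {f : Z → ℝ}
include hT hmass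

lemma sum_abs_map_layer_le (hU : IsOpen U) (hf : LipBS f) (hfU : tsupport f ⊆ U)
    (hτ : ∀ k, LipschitzWith 1 (τ k)) {δ : ℝ} (hδ : 0 < δ) (N : ℕ) :
    ∑ j ∈ Finset.range N, ENNReal.ofReal |T (layer δ j ∘ f) τ| ≤
      2 * (ENNReal.ofReal δ * μ U) + ∫⁻ z, ENNReal.ofReal (max (f z) 0) ∂μ := by
  set V : ℕ → Set Z := fun j => {z | (j - 1) * δ < f z} ∩ U
  have hV : ∀ j : ℕ, V (j + 2) ⊆ {z | (j + 1) * δ < f z} := fun j z hz => by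
    have hz₁ : ((j + 2 : ℕ) - 1 : ℝ) * δ < f z := hz.1
    push_cast at hz₁
    exact show ((j : ℝ) + 1) * δ < f z by linarith
  -- Shifting the index by two compares slab `j + 2` with the integral of slab `j`.
  calc ∑ j ∈ Finset.range N, ENNReal.ofReal |T (layer δ j ∘ f) τ|
      ≤ ∑ j ∈ Finset.range (N + 2), ENNReal.ofReal δ * μ (V j) :=
        (Finset.sum_le_sum fun j _ => hT.abs_map_layer_comp_le hmass hU hf hfU hτ hδ j).trans
          (Finset.sum_le_sum_of_subset (Finset.range_subset_range.mpr (by omega)))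
    _ = ∑ j ∈ Finset.range N, ENNReal.ofReal δ * μ (V (j + 2)) +
        ENNReal.ofReal δ * μ (V 1) + ENNReal.ofReal δ * μ (V 0) := by
        rw [Finset.sum_range_succ', Finset.sum_range_succ']
    _ ≤ ∑ j ∈ Finset.range N, ENNReal.ofReal δ * μ {z | (j + 1) * δ < f z} +
        ENNReal.ofReal δ * μ U + ENNReal.ofReal δ * μ U := by
        gcongr with j
        exacts [hV j, Set.inter_subset_right, Set.inter_subset_right]
    _ ≤ ∫⁻ z, ENNReal.ofReal (max (f z) 0) ∂μ + ENNReal.ofReal δ * μ U +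
        ENNReal.ofReal δ * μ U := by
        gcongr
        exact sum_mul_measure_lt_le_lintegral hf.continuous hδ.le N
    _ = 2 * (ENNReal.ofReal δ * μ U) + ∫⁻ z, ENNReal.ofReal (max (f z) 0) ∂μ := by ring

lemma abs_map_le_lintegral_add (hU : IsOpen U) (hf : LipBS f) (hfU : tsupport f ⊆ U)
    (hτ : ∀ k, LipschitzWith 1 (τ k)) {δ : ℝ} (hδ : 0 < δ) :
    ENNReal.ofReal |T f τ| ≤ 4 * (ENNReal.ofReal δ * μ U) + ∫⁻ z, ENNReal.ofReal |f z| ∂μ := by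
  have hτ' : ∀ k, LipLoc (τ k) := fun k => (hτ k).lipLoc
  obtain ⟨F, hF⟩ := hf.exists_abs_le
  set N := ⌈F / δ⌉₊
  have hNδ : ∀ z, |f z| ≤ N * δ := fun z => (hF z).trans ((div_le_iff₀ hδ).mp (Nat.le_ceil _))
  have hlayers : ∀ g : Z → ℝ, LipBS g → ∀ j ∈ Finset.range N, LipBS (layer δ j ∘ g) :=
    fun g hg j _ => hg.comp (lipschitzWith_layer δ j) (layer_zero hδ.le j)
  have hdecomp :
      f = ∑ j ∈ Finset.range N, layer δ j ∘ f - ∑ j ∈ Finset.range N, layer δ j ∘ (-f) := by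
    funext z
    simpa [Finset.sum_apply] using (sum_layer_sub_sum_layer_neg hδ.le (hNδ z)).symm
  have hsplit : T f τ = ∑ j ∈ Finset.range N, T (layer δ j ∘ f) τ -
      ∑ j ∈ Finset.range N, T (layer δ j ∘ (-f)) τ := by
    conv_lhs => rw [hdecomp]
    rw [hT.map_sub (LipBS.sum _ (hlayers f hf)) (LipBS.sum _ (hlayers _ hf.neg)) hτ',
      hT.map_sum _ (hlayers f hf) hτ', hT.map_sum _ (hlayers _ hf.neg) hτ']
  have hparts : ∫⁻ z, ENNReal.ofReal (max (f z) 0) ∂μ +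
      ∫⁻ z, ENNReal.ofReal (max ((-f) z) 0) ∂μ = ∫⁻ z, ENNReal.ofReal |f z| ∂μ := by
    rw [← lintegral_add_left (hf.continuous.max continuous_const).measurable.ennreal_ofReal]
    simp_rw [← ENNReal.ofReal_add (le_max_right _ _) (le_max_right _ _), Pi.neg_apply,
      max_zero_add_max_neg_zero_eq_abs_self]
  calc ENNReal.ofReal |T f τ|
      ≤ ∑ j ∈ Finset.range N, ENNReal.ofReal |T (layer δ j ∘ f) τ| +
        ∑ j ∈ Finset.range N, ENNReal.ofReal |T (layer δ j ∘ (-f)) τ| := by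
        rw [← ENNReal.ofReal_sum_of_nonneg fun _ _ => abs_nonneg _,
          ← ENNReal.ofReal_sum_of_nonneg fun _ _ => abs_nonneg _,
          ← ENNReal.ofReal_add (by positivity) (by positivity), hsplit]
        exact ENNReal.ofReal_le_ofReal ((abs_sub _ _).trans
          (add_le_add (Finset.abs_sum_le_sum_abs _ _) (Finset.abs_sum_le_sum_abs _ _)))
    _ ≤ (2 * (ENNReal.ofReal δ * μ U) + ∫⁻ z, ENNReal.ofReal (max (f z) 0) ∂μ) +
        (2 * (ENNReal.ofReal δ * μ U) + ∫⁻ z, ENNReal.ofReal (max ((-f) z) 0) ∂μ) :=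
        add_le_add (hT.sum_abs_map_layer_le hmass hU hf hfU hτ hδ N)
          (hT.sum_abs_map_layer_le hmass hU hf.neg ((tsupport_neg f).trans_subset hfU) hτ hδ N)
    _ = 4 * (ENNReal.ofReal δ * μ U) + ∫⁻ z, ENNReal.ofReal |f z| ∂μ := by
        rw [← hparts]
        ring

lemma abs_map_le_lintegral (hU : IsOpen U) (hμU : μ U ≠ ⊤) (hf : LipBS f)
    (hfU : tsupport f ⊆ U) (hτ : ∀ k, LipschitzWith 1 (τ k)) :
    ENNReal.ofReal |T f τ| ≤ ∫⁻ z, ENNReal.ofReal |f z| ∂μ := by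
  have hδμ : Tendsto (fun δ => ENNReal.ofReal δ * μ U) (𝓝 0) (𝓝 0) := by
    simpa using ENNReal.Tendsto.mul_const
      (ENNReal.tendsto_ofReal (tendsto_id (x := 𝓝 (0 : ℝ)))) (Or.inr hμU)
  have hlim : Tendsto (fun δ => 4 * (ENNReal.ofReal δ * μ U) + ∫⁻ z, ENNReal.ofReal |f z| ∂μ)
      (𝓝[>] 0) (𝓝 (∫⁻ z, ENNReal.ofReal |f z| ∂μ)) := by
    simpa using ((ENNReal.Tendsto.const_mul hδμ (Or.inr ENNReal.ofNat_ne_top)).add_const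
      _).mono_left nhdsWithin_le_nhds
  exact ge_of_tendsto hlim (eventually_nhdsWithin_of_forall fun δ hδ =>
    hT.abs_map_le_lintegral_add hmass hU hf hfU hτ hδ)

end IsMultilinearFunctional

lemma IsMetricFunctional.abs_map_le_prod_mul {m : ℕ} {T : (Z → ℝ) → (Fin m → Z → ℝ) → ℝ}
    (hT : IsMetricFunctional T) {f : Z → ℝ} (hf : LipBS f) {I : ℝ≥0∞}
    (hI : ∀ τ : Fin m → Z → ℝ, (∀ k, LipschitzWith 1 (τ k)) → ENNReal.ofReal |T f τ| ≤ I)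
    {σ : Fin m → Z → ℝ} {K : Fin m → NNReal} (hσ : ∀ i, LipschitzWith (K i) (σ i)) :
    ENNReal.ofReal |T f σ| ≤ (∏ i, (K i : ℝ≥0∞)) * I := by
  have hσ' : ∀ i, LipLoc (σ i) := fun i => (hσ i).lipLoc
  by_cases hK : ∃ i, K i = 0
  · obtain ⟨i, hi⟩ := hK
    have hconst : ∀ z w, σ i z = σ i w := fun z w => by
      simpa [hi] using (hσ i).dist_le_mul z w
    simp [hT.map_eq_zero_of_const_near hf hσ' i one_pos fun z w _ _ => hconst z w]
  rw [not_exists] at hK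
  set τ : Fin m → Z → ℝ := fun i => (K i : ℝ)⁻¹ • σ i
  have hτ : ∀ i, LipschitzWith 1 (τ i) := fun i => by
    have h := (lipschitzWith_smul (K i : ℝ)⁻¹).comp (hσ i)
    rwa [nnnorm_inv, NNReal.nnnorm_eq, inv_mul_cancel₀ (hK i)] at h
  have hστ : σ = fun i => (K i : ℝ) • τ i := funext fun i => by
    simp [τ, smul_smul, hK i]
  rw [hστ, hT.1.map_smul_right hf fun i => (hτ i).lipLoc, abs_mul,
    abs_of_nonneg (by positivity), ENNReal.ofReal_mul (by positivity), ← NNReal.coe_prod,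
    ENNReal.ofReal_coe_nnreal, ENNReal.ofNNReal_finsetProd]
  gcongr
  exact hI τ hτ

/-- Proposition 2.5, first part: the integral mass inequality
`|T(f,π)| ≤ ∏ Lip(π_i|spt f) ∫ |f| d‖T‖` for currents with locally finite mass. -/
theorem integral_mass_bound {Z : Type*} [MetricSpace Z] [MeasurableSpace Z] [BorelSpace Z]
    {m : ℕ} (T : (Z → ℝ) → (Fin m → Z → ℝ) → ℝ)
    (hT : IsMetricFunctional T) (hTloc : MlocCond T)
    (μ : Measure Z) (hμ : ∀ s : Set Z, MeasurableSet s → μ s = normT T s)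
    (f : Z → ℝ) (π : Fin m → Z → ℝ) (K : Fin m → NNReal)
    (hf : LipBS f) (hπ : ∀ i, LipLoc (π i))
    (hK : ∀ i, LipschitzOnWith (K i) (π i) (tsupport f)) :
    ENNReal.ofReal |T f π| ≤
      (∏ i, (K i : ℝ≥0∞)) * ∫⁻ z, ENNReal.ofReal |f z| ∂μ := by
  have hmass : ∀ V, IsOpen V → μ V = massIn T V := fun V hV => by
    rw [hμ V hV.measurableSet, normT_eq_massIn T hV]
  choose σ hσ hπσ using fun i => (hK i).extend_real
  rw [hT.map_eq_of_eqOn_tsupport hf hπ (fun i => (hσ i).lipLoc) hπσ]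
  set U := thickening 1 (tsupport f)
  obtain ⟨-, -, -, hU, -⟩ := hTloc U isOpen_thickening hf.2.thickening 1 one_pos
  refine hT.abs_map_le_prod_mul hf (fun τ hτ => ?_) hσ
  exact hT.1.abs_map_le_lintegral (fun V hV => (hmass V hV).ge) isOpen_thickening
    ((hmass U isOpen_thickening).trans_lt hU).ne hf (self_subset_thickening one_pos _) hτ
end
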